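/- Let s be a square root on an MV-algebra M. For all x,y ∈ M: s(x⊙y) = (s(x)⊙s(y)) ∨ s(0). In particular, s(x⊙x) = x ∨ s(0) for every x ∈ M. -/
import Mathlib


class MVAlg (M : Type*) where
  add : M → M → M
  compl : M → M
  zero : M
  one : M
  add_comm : ∀ x y, add x y = add y x
  add_assoc : ∀ x y z, add (add x y) z = add x (add y z)
  add_zero : ∀ x, add x zero = x
  compl_compl : ∀ x, compl (compl x) = x
  add_one : ∀ x, add x one = one
  chang : ∀ x y, add x (compl (add x (compl y))) = add y (compl (add y (compl x)))
  compl_zero : compl zero = one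

namespace MVAlg

variable {M : Type*} [MVAlg M]

/-- x ⊙ y := (x' ⊕ y')' -/
def odot (x y : M) : M := compl (add (compl x) (compl y))

/-- x ≤ y iff x' ⊕ y = 1 -/
def le (x y : M) : Prop := add (compl x) y = one

/-- x ∧ y := x ⊙ (x' ⊕ y) -/
def inf (x y : M) : M := odot x (add (compl x) y)

/-- x ∨ y := (x ⊙ y') ⊕ y -/
def sup (x y : M) : M := add (odot x (compl y)) y

/-- x ⊖ y := x ⊙ y' -/
def sub (x y : M) : M := odot x (compl y)

/-- A square root on an MV-algebra. -/
def IsSquareRoot (s : M → M) : Prop :=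
  (∀ x : M, odot (s x) (s x) = x) ∧ ∀ x y : M, le (odot y y) x → le y (s x)

end MVAlg

namespace MVAlg

variable {M : Type*} [MVAlg M]

local infixl:65 (priority := high) " ⊹ " => MVAlg.add
local infixl:70 (priority := high) " ⊛ " => MVAlg.odot
local postfix:max (priority := high) "′" => MVAlg.compl
local infix:50 (priority := high) " ≼ " => MVAlg.le

instance : Std.Associative (α := M) MVAlg.add := ⟨MVAlg.add_assoc⟩
instance : Std.Commutative (α := M) MVAlg.add := ⟨MVAlg.add_comm⟩

lemma zero_add' (x : M) : (zero : M) ⊹ x = x := by rw [add_comm, add_zero]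

lemma compl_one : (one : M)′= zero := by rw [← compl_zero, compl_compl]

lemma one_add (x : M) : (one : M) ⊹ x = one := by rw [add_comm, add_one]

lemma compl_inj {x y : M} (h : x′= y′) : x = y := by
  rw [← compl_compl x, h, compl_compl]

lemma add_compl (x : M) : x ⊹ x′= one := by
  have h := chang x (one : M)
  rw [compl_one, add_zero, one_add] at h
  exact h

lemma compl_add (x : M) : x′⊹ x = one := by rw [add_comm]; exact add_compl x

lemma lrefl (x : M) : x ≼ x := compl_add x

lemma odot_def (x y : M) : x ⊛ y = (x′⊹ y′)′:= rfl

lemma odot_comm (x y : M) : x ⊛ y = y ⊛ x := by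
  rw [odot_def, odot_def, add_comm]

lemma odot_assoc (x y z : M) : (x ⊛ y) ⊛ z = x ⊛ (y ⊛ z) := by
  simp only [odot_def, compl_compl, add_assoc]

instance : Std.Associative (α := M) MVAlg.odot := ⟨odot_assoc⟩
instance : Std.Commutative (α := M) MVAlg.odot := ⟨odot_comm⟩

lemma odot_one (x : M) : x ⊛ one = x := by
  rw [odot_def, compl_one, add_zero, compl_compl]

lemma odot_zero (x : M) : x ⊛ zero = zero := by
  rw [odot_def, compl_zero, add_one, compl_one]

lemma zero_odot (x : M) : (zero : M) ⊛ x = zero := by rw [odot_comm, odot_zero]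

lemma compl_add_eq (x y : M) : (x ⊹ y)′= x′⊛ y′:= by
  rw [odot_def, compl_compl, compl_compl]

lemma compl_odot_eq (x y : M) : (x ⊛ y)′= x′⊹ y′:= by
  rw [odot_def, compl_compl]

lemma le_iff_odot {x y : M} : x ≼ y ↔ x ⊛ y′= zero := by
  constructor
  · intro h
    have h' : x′⊹ y = one := h
    rw [odot_def, compl_compl, h', compl_one]
  · intro h
    show x′⊹ y = one
    apply compl_inj
    rw [compl_one, ← h, odot_def, compl_compl]

lemma I1 (x y : M) : (x ⊹ y)′⊹ y = x′⊹ (x ⊛ y) := by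
  have h := chang y (x′)
  rw [compl_compl] at h
  rw [add_comm y x, add_comm y ((x ⊹ y)′)] at h
  exact h

lemma E1 (x y : M) : (x ⊹ y) ⊛ x′= y ⊛ (x ⊛ y)′:= by
  have h := I1 y x
  rw [odot_def (x ⊹ y), compl_compl, add_comm x y, h, odot_comm y x]
  rw [odot_def y ((x ⊛ y)′), compl_compl]

lemma E2 (x y : M) : (x ⊛ y) ⊹ x′= y ⊹ (x ⊹ y)′:= by
  have h := congrArg compl (E1 (x′) (y′))
  rw [compl_odot_eq, compl_odot_eq] at h
  simp only [compl_compl] at h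
  rw [← odot_def, ← compl_add_eq] at h
  exact h

lemma add_left_comm' (a b c : M) : a ⊹ (b ⊹ c) = b ⊹ (a ⊹ c) := by
  rw [← add_assoc, add_comm a b, add_assoc]

lemma le_add_left (x y : M) : x ≼ (y ⊹ x) := by
  show x′⊹ (y ⊹ x) = one
  rw [add_left_comm', compl_add, add_one]

lemma le_add_right (x y : M) : x ≼ (x ⊹ y) := by
  have h := le_add_left x y
  rw [add_comm y x] at h
  exact h

lemma sup_comm' (x y : M) : sup x y = sup y x := by
  show (x ⊛ y′) ⊹ y = (y ⊛ x′) ⊹ x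
  have h := I1 (x′) y
  rw [compl_compl] at h
  rw [odot_def x (y′), compl_compl, h, odot_comm (x′) y, add_comm]

lemma le_sup_right (x y : M) : y ≼ sup x y := le_add_left y (x ⊛ y′)

lemma le_sup_left (x y : M) : x ≼ sup x y := by
  rw [sup_comm']; exact le_sup_right y x

lemma le_iff_sup {x y : M} : x ≼ y ↔ sup x y = y := by
  constructor
  · intro h
    show (x ⊛ y′) ⊹ y = y
    rw [le_iff_odot.mp h, zero_add']
  · intro h
    rw [← h]; exact le_sup_left x y

lemma sup_eq_of_le {x y : M} (h : x ≼ y) : (y ⊛ x′) ⊹ x = y := by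
  have := le_iff_sup.mp h
  rw [sup_comm'] at this
  exact this

lemma ltrans {x y z : M} (h1 : x ≼ y) (h2 : y ≼ z) : x ≼ z := by
  have e1 := sup_eq_of_le h1
  have e2 := sup_eq_of_le h2
  rw [← e2, ← e1, ← add_assoc]
  exact le_add_left x _

lemma lantisymm {x y : M} (h1 : x ≼ y) (h2 : y ≼ x) : x = y := by
  calc x = sup y x := (le_iff_sup.mp h2).symm
  _ = sup x y := (sup_comm' x y).symm
  _ = y := le_iff_sup.mp h1

lemma add_le_add_left' {a b : M} (h : a ≼ b) (c : M) : (c ⊹ a) ≼ (c ⊹ b) := by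
  have e := sup_eq_of_le h
  rw [← e, add_left_comm']
  exact le_add_left _ _

lemma add_le_add' {a b c d : M} (h1 : a ≼ b) (h2 : c ≼ d) : (a ⊹ c) ≼ (b ⊹ d) := by
  have s1 : (a ⊹ c) ≼ (b ⊹ c) := by
    have := add_le_add_left' h1 c
    rw [add_comm c a, add_comm c b] at this
    exact this
  exact ltrans s1 (add_le_add_left' h2 b)

lemma compl_le_compl' {a b : M} (h : a ≼ b) : b′≼ a′:= by
  show b′′⊹ a′= one
  rw [compl_compl, add_comm]
  exact h

lemma odot_le_odot {a b c d : M} (h1 : a ≼ b) (h2 : c ≼ d) : (a ⊛ c) ≼ (b ⊛ d) :=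
  compl_le_compl' (add_le_add' (compl_le_compl' h1) (compl_le_compl' h2))

lemma zero_le' (x : M) : (zero : M) ≼ x := by
  show (zero : M)′⊹ x = one
  rw [compl_zero, one_add]

lemma eq_zero_of_le_zero {x : M} (h : x ≼ zero) : x = zero := by
  have h' : x′⊹ zero = one := h
  rw [add_zero] at h'
  apply compl_inj
  rw [compl_zero, h']

lemma odot_le_left (x y : M) : (x ⊛ y) ≼ x := by
  show (x ⊛ y)′⊹ x = one
  rw [compl_odot_eq, add_comm (x′) (y′), add_assoc, compl_add, add_one]

lemma odot_le_right (x y : M) : (x ⊛ y) ≼ y := by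
  rw [odot_comm]; exact odot_le_left y x

lemma odot_compl_self (x : M) : x ⊛ x′= zero := le_iff_odot.mp (lrefl x)

lemma compl_odot_self (x : M) : x′⊛ x = zero := by
  rw [odot_comm]; exact odot_compl_self x

lemma le_compl_of_odot {a b : M} (h : a ⊛ b = zero) : a ≼ b′:=
  le_iff_odot.mpr (by rw [compl_compl]; exact h)

lemma odot_eq_zero_of_le_compl {a b : M} (h : a ≼ b′) : a ⊛ b = zero := by
  have := le_iff_odot.mp h
  rw [compl_compl] at this
  exact this

lemma sup_le' {a b c : M} (h1 : a ≼ c) (h2 : b ≼ c) : sup a b ≼ c := by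
  have k1 : (a ⊛ b′) ⊹ b ≼ (c ⊛ b′) ⊹ b :=
    add_le_add' (odot_le_odot h1 (lrefl _)) (lrefl b)
  have k3 : (c ⊛ b′) ⊹ b = c := by
    have := le_iff_sup.mp h2
    rw [sup_comm'] at this
    exact this
  show (a ⊛ b′) ⊹ b ≼ c
  rw [← k3]
  exact k1

lemma odot_le_of_le_add {a b c : M} (h : a ≼ (b′⊹ c)) : (a ⊛ b) ≼ c := by
  have k1 : a ⊛ b ≼ (b′⊹ c) ⊛ b := odot_le_odot h (lrefl b)
  have k2 : (b′⊹ c) ⊛ b = c ⊛ (b′⊛ c)′:= by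
    have := E1 (b′) c
    rw [compl_compl] at this
    exact this
  rw [k2] at k1
  exact ltrans k1 (odot_le_left _ _)

lemma extract {a b : M} (h : a ⊛ b = zero) : (a ⊹ b) ⊛ b′= a := by
  have e := E1 b a
  rw [odot_comm b a, h, compl_zero, odot_one, add_comm b a] at e
  exact e

lemma Zlem {z p q : M} (h1 : z ≼ q) (h2 : (z ⊹ q′) ≼ p) : z ≼ (p ⊛ q) := by
  have e : (q′⊹ z) ⊛ q = z := by
    have h := E1 (q′) z
    rw [compl_compl] at h
    have hz : q′⊛ z = zero := by
      rw [odot_comm]; exact le_iff_odot.mp h1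
    rw [hz, compl_zero, odot_one] at h
    exact h
  have h2' : (q′⊹ z) ≼ p := by rw [add_comm]; exact h2
  have := odot_le_odot h2' (lrefl q)
  rw [e] at this
  exact this

lemma le_of_eq' {a b : M} (h : a = b) : a ≼ b := by rw [h]; exact lrefl b

/-- Key lemma: if t² ≤ c², c ≤ t, s0 ≤ c then t ≤ c. -/
lemma crux (s : M → M) (hs : IsSquareRoot s) (t c : M)
    (Hsq : (t ⊛ t) ≼ (c ⊛ c)) (Hct : c ≼ t) (Hs0 : s zero ≼ c) : t ≼ c := by
  set s0 := s zero with hs0def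
  have s0sq : s0 ⊛ s0 = zero := hs.1 zero
  have smax : ∀ z : M, z ⊛ z = zero → z ≼ s0 := fun z h =>
    hs.2 zero z (by show (z ⊛ z) ≼ zero; rw [h]; exact lrefl zero)
  set g := t ⊛ c′with hg
  set n := c ⊛ (c ⊛ c)′with hn
  -- basic facts about g
  have g_odot_c : g ⊛ c = zero := by
    rw [hg, odot_assoc, compl_odot_self, odot_zero]
  have gg : g ⊛ g = zero := by
    have e1 : g ⊛ g = (t ⊛ t) ⊛ (c′⊛ c′) := by rw [hg]; ac_rfl
    have e2 : (c ⊛ c) ⊛ (c′⊛ c′) = zero := by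
      have : (c ⊛ c) ⊛ (c′⊛ c′) = (c ⊛ c′) ⊛ (c ⊛ c′) := by ac_rfl
      rw [this, odot_compl_self, odot_zero]
    have := odot_le_odot Hsq (lrefl (c′⊛ c′))
    rw [e2] at this
    rw [e1]
    exact eq_zero_of_le_zero this
  have g_le_s0 : g ≼ s0 := smax g gg
  have g_le_c' : g ≼ c′:= odot_le_right t (c′)
  have g_le_c : g ≼ c := ltrans g_le_s0 Hs0
  have t_eq : g ⊹ c = t := by
    have h1 : sup t c = t := by rw [sup_comm']; exact le_iff_sup.mp Hct
    exact h1
  -- facts about n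
  have n_odot_c : n ⊛ c = zero := by
    have e : n ⊛ c = (c ⊛ c) ⊛ (c ⊛ c)′:= by rw [hn]; ac_rfl
    rw [e, odot_compl_self]
  have n_le_c' : n ≼ c′:= le_compl_of_odot n_odot_c
  have n_le_c : n ≼ c := odot_le_left _ _
  have n_sum : n ⊹ (c ⊛ c) = c := by
    have : sup c (c ⊛ c) = c := by
      rw [sup_comm']; exact le_iff_sup.mp (odot_le_left c c)
    exact this
  -- Z-lemma application: g ⊹ n ≤ t ⊙ (c'⊕c')
  have zq : (g ⊹ n) ≼ (c′⊹ c′) := add_le_add' g_le_c' n_le_c'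
  have qc_eq : (c′⊹ c′)′= c ⊛ c := by
    rw [compl_add_eq]; simp only [compl_compl]
  have zsum : (g ⊹ n) ⊹ (c′⊹ c′)′= t := by
    rw [qc_eq, add_assoc, n_sum, t_eq]
  have Zapp : (g ⊹ n) ≼ (t ⊛ (c′⊹ c′)) := Zlem zq (le_of_eq' zsum)
  -- F1 : (g⊞n)⊙t = 0
  have F1 : (g ⊹ n) ⊛ t = zero := by
    have k := odot_le_odot Zapp (lrefl t)
    have e2 : (t ⊛ (c′⊹ c′)) ⊛ t = (t ⊛ t) ⊛ (c ⊛ c)′:= by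
      rw [compl_odot_eq]; ac_rfl
    have e3 : (t ⊛ t) ⊛ (c ⊛ c)′= zero := le_iff_odot.mp Hsq
    rw [e2, e3] at k
    exact eq_zero_of_le_zero k
  have gn_le_t' : (g ⊹ n) ≼ t′:= le_compl_of_odot F1
  -- key : 2g ⊹ n ≤ c′
  have e3 : t′⊹ g = c′:= by
    have h := I1 c g
    have hcg : c ⊛ g = zero := by rw [odot_comm]; exact g_odot_c
    rw [hcg, add_zero, add_comm c g, t_eq] at h
    exact h
  have key : (g ⊹ g) ⊹ n ≼ c′:= by
    have h := add_le_add' gn_le_t' (lrefl g)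
    rw [e3] at h
    have e4 : (g ⊹ n) ⊹ g = (g ⊹ g) ⊹ n := by ac_rfl
    rw [e4] at h
    exact h
  have gg_le_c' : (g ⊹ g) ≼ c′:= ltrans (le_add_right (g ⊹ g) n) key
  have ggc : (g ⊹ g) ⊛ c = zero := odot_eq_zero_of_le_compl gg_le_c'
  have ggn : (g ⊹ g) ⊛ n = zero := by
    have := odot_le_odot (lrefl (g ⊹ g)) n_le_c
    rw [ggc] at this
    exact eq_zero_of_le_zero this
  have bound : (g ⊹ g) ≼ (c′⊛ n′) := by
    have e := extract ggn
    rw [← e]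
    exact odot_le_odot key (lrefl _)
  -- E5 : c′⊙ n′≤ c′⊙ c′
  have n_compl : n′= c′⊹ (c ⊛ c) := by
    rw [hn, compl_odot_eq, compl_compl]
  have E5 : (c′⊛ n′) ≼ (c′⊛ c′) := by
    rw [n_compl]
    have e : (c′⊛ c′) ⊹ c = c′⊹ (c ⊛ c) := by
      have h := E2 (c′) (c′)
      rw [compl_compl] at h
      rw [h, compl_add_eq]; simp only [compl_compl]
    have h2 : (c′⊹ (c ⊛ c)) ≼ (c′′⊹ (c′⊛ c′)) := by
      rw [compl_compl, ← e, add_comm c (c′⊛ c′)]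
      exact lrefl _
    have := odot_le_of_le_add h2
    rw [odot_comm]
    exact this
  have ii : (g ⊹ g) ≼ (c′⊛ c′) := ltrans bound E5
  -- finish
  have g_s0 : g ⊛ s0 = zero := by
    have := odot_le_odot (lrefl g) Hs0
    rw [g_odot_c] at this
    exact eq_zero_of_le_zero this
  have S1 : (g ⊹ s0) ⊛ g = zero := by
    have m3 : (g ⊹ s0) ⊛ g ≼ (c ⊹ c) ⊛ (g ⊹ g) :=
      odot_le_odot (add_le_add' g_le_c Hs0) (le_add_right g g)
    have m4 : (c ⊹ c) ⊛ (g ⊹ g) = zero := by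
      have h := le_iff_odot.mp ii
      rw [compl_odot_eq] at h
      simp only [compl_compl] at h
      rw [odot_comm]
      exact h
    rw [m4] at m3
    exact eq_zero_of_le_zero m3
  have S1' : (g ⊹ s0) ≼ g′:= le_compl_of_odot S1
  have c'_le_s0' : c′≼ s0′:= compl_le_compl' Hs0
  have S2 : (g ⊹ g) ⊹ s0 ≼ s0′:= by
    have a1 : (g ⊹ g) ≼ (s0′⊛ s0′) := ltrans ii (odot_le_odot c'_le_s0' c'_le_s0')
    have a2 : (g ⊹ g) ⊹ s0 ≼ (s0′⊛ s0′) ⊹ s0 := add_le_add' a1 (lrefl s0)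
    have a3 : (s0′⊛ s0′) ⊹ s0 = s0′:= by
      have h := E2 (s0′) (s0′)
      rw [compl_compl] at h
      rw [h, compl_add_eq]
      simp only [compl_compl]
      rw [s0sq, add_zero]
    rw [a3] at a2
    exact a2
  have Zfin : (g ⊹ s0) ≼ (s0′⊛ g′) := by
    apply Zlem S1'
    rw [compl_compl]
    have e : (g ⊹ s0) ⊹ g = (g ⊹ g) ⊹ s0 := by ac_rfl
    rw [e]
    exact S2
  have zz : (g ⊹ s0) ⊛ (g ⊹ s0) = zero := by
    have e : s0′⊛ g′= (g ⊹ s0)′:= by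
      rw [compl_add_eq, odot_comm]
    rw [e] at Zfin
    exact odot_eq_zero_of_le_compl Zfin
  have z_le_s0 : (g ⊹ s0) ≼ s0 := smax _ zz
  have g0 : g = zero := by
    have e := extract g_s0
    have : g ≼ s0 ⊛ s0′:= by
      rw [← e]
      exact odot_le_odot z_le_s0 (lrefl _)
    rw [odot_compl_self] at this
    exact eq_zero_of_le_zero this
  exact le_iff_odot.mpr g0

lemma sqrt_sq (s : M → M) (hs : IsSquareRoot s) (a : M) :
    s (a ⊛ a) = sup a (s zero) := by
  have h1 : a ≼ s (a ⊛ a) := hs.2 _ a (lrefl _)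
  have h2 : s zero ≼ s (a ⊛ a) := by
    apply hs.2
    show (s zero ⊛ s zero) ≼ (a ⊛ a)
    rw [hs.1 zero]
    exact zero_le' _
  have hct : sup a (s zero) ≼ s (a ⊛ a) := sup_le' h1 h2
  have hsq : (s (a ⊛ a) ⊛ s (a ⊛ a)) ≼ (sup a (s zero) ⊛ sup a (s zero)) := by
    rw [hs.1]
    exact odot_le_odot (le_sup_left _ _) (le_sup_left _ _)
  exact lantisymm (crux s hs _ _ hsq hct (le_sup_right _ _)) hct

end MVAlg

theorem square_root_odot_eq {M : Type*} [MVAlg M] (s : M → M)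
    (hs : MVAlg.IsSquareRoot s) :
    (∀ x y : M, s (MVAlg.odot x y) = MVAlg.sup (MVAlg.odot (s x) (s y)) (s MVAlg.zero)) ∧
    (∀ x : M, s (MVAlg.odot x x) = MVAlg.sup x (s MVAlg.zero)) := by
  constructor
  · intro x y
    have hq : MVAlg.odot (MVAlg.odot (s x) (s y)) (MVAlg.odot (s x) (s y)) = MVAlg.odot x y := by
      have e : MVAlg.odot (MVAlg.odot (s x) (s y)) (MVAlg.odot (s x) (s y)) =
          MVAlg.odot (MVAlg.odot (s x) (s x)) (MVAlg.odot (s y) (s y)) := by ac_rfl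
      rw [e, hs.1, hs.1]
    rw [← hq, MVAlg.sqrt_sq s hs]
  · intro x
    exact MVAlg.sqrt_sq s hs x
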